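/- Let k ≥ 1 be an integer, h > 0, t₀ ∈ ℝ, and let u : ℝ → ℝ be (k+1)-times continuously differentiable on [t₀, t₀ + k²·h] with |u^{(k+1)}(s)| ≤ M for all s in [t₀, t₀ + k²·h]. Then |u′(t₀) − (1/h)·∑_{i=0}^k β_i^k u(t₀ + i²·h)| ≤ M·((k!)²/(k+1)!)·h^k, where β_0^k = −∑_{j=1}^k 1/j² and β_i^k = (−1)^{k−1}·(k!)² / (i² · ∏_{0≤j≤k, j≠i} (i² − j²)) for 1 ≤ i ≤ k. -/

import Mathlib

/-!
Let `p` be the Lagrange interpolant of `u` at the nodes `tᵢ = t₀ + i²h`, `0 ≤ i ≤ k`, and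
`ω = ∏ᵢ (X - tᵢ)` the nodal polynomial. Differentiating the Lagrange basis at `t₀` shows that the
difference quotient is exactly `p'(t₀)`. The classical interpolation error argument, with
the node `t₀` taken as a double zero, gives `u'(t₀) - p'(t₀) = u⁽ᵏ⁺¹⁾(ξ) / (k+1)! · ω'(t₀)`:
subtract from `u` the polynomial `p + cω` whose derivative at `t₀` agrees with `u'(t₀)`; the
difference vanishes at the `k + 1` nodes and its derivative at `t₀` and at `k` Rolle points, so
by Rolle's theorem `k` more times its `(k+1)`-st derivative `u⁽ᵏ⁺¹⁾ - c (k+1)!` has a zero.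
Finally `ω'(t₀) = ∏_{j=1}^k (t₀ - tⱼ) = (-h)ᵏ (k!)²`.
-/

/-- The coefficients `β_i^k` of the non-equidistant derivative approximation:
`β_0^k = -∑_{j=1}^k 1/j²` and
`β_i^k = (-1)^(k-1)·(k!)² / (i² · ∏_{0≤j≤k, j≠i} (i² − j²))` for `1 ≤ i ≤ k`. -/
noncomputable def betaCoef (k i : ℕ) : ℝ :=
  if i = 0 then -(∑ j ∈ Finset.Icc 1 k, (1 : ℝ) / (j : ℝ) ^ 2)
  else (-1) ^ (k - 1) * ((Nat.factorial k : ℝ)) ^ 2 /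
    ((i : ℝ) ^ 2 * ∏ j ∈ (Finset.range (k + 1)).erase i, ((i : ℝ) ^ 2 - (j : ℝ) ^ 2))

open Polynomial

namespace Polynomial

theorem Monic.iterate_derivative_natDegree {R : Type*} [Semiring R] {p : R[X]} (hp : p.Monic) :
    derivative^[p.natDegree] p = C (p.natDegree.factorial : R) := by
  ext m
  rw [coeff_iterate_derivative, coeff_C]
  rcases Nat.eq_zero_or_pos m with rfl | hm
  · simp [hp.coeff_natDegree, Nat.descFactorial_self]
  · rw [coeff_eq_zero_of_natDegree_lt (by omega), smul_zero, if_neg hm.ne']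

variable {𝕜 : Type*} [NontriviallyNormedField 𝕜]

theorem contDiff_eval (q : 𝕜[X]) (n : WithTop ℕ∞) : ContDiff 𝕜 n fun x => q.eval x := by
  simpa using q.contDiff_aeval (𝕜 := 𝕜) n

theorem iteratedDerivWithin_eval (q : 𝕜[X]) {s : Set 𝕜} (hs : UniqueDiffOn 𝕜 s) (n : ℕ) {x : 𝕜}
    (hx : x ∈ s) : iteratedDerivWithin n (fun t => q.eval t) s x = (derivative^[n] q).eval x := by
  induction n generalizing q with
  | zero => simp
  | succ n ih =>
    rw [iteratedDerivWithin_succ', Function.iterate_succ_apply,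
      iteratedDerivWithin_congr (fun y hy => q.derivWithin (hs.uniqueDiffWithinAt hy)) hx]
    exact ih _

end Polynomial

namespace Lagrange

open Finset

theorem iterate_derivative_add_C_mul_nodal {R ι : Type*} [CommRing R] [Nontrivial R]
    {s : Finset ι} {v : ι → R} {p : R[X]} (hp : p.degree < #s) (c : R) :
    derivative^[#s] (p + C c * nodal s v) = C (c * (#s).factorial) := by
  rw [iterate_map_add, iterate_derivative_eq_zero_of_degree_lt hp, zero_add,
    iterate_derivative_C_mul, ← natDegree_nodal (v := v), nodal_monic.iterate_derivative_natDegree,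
    C_mul]

variable {F ι : Type*} [Field F] [DecidableEq ι] {s : Finset ι} {v : ι → F} {i j : ι}

theorem eval_derivative_basis_self (hvs : Set.InjOn v s) (hi : i ∈ s) :
    eval (v i) (derivative (Lagrange.basis s v i)) = ∑ j ∈ s.erase i, (v i - v j)⁻¹ := by
  have hone : ∀ j ∈ s.erase i, eval (v i) (basisDivisor (v i) (v j)) = 1 := fun j hj =>
    eval_basisDivisor_left_of_ne fun h =>
      (mem_erase.mp hj).1 (hvs (mem_of_mem_erase hj) hi h.symm)
  rw [Lagrange.basis, derivative_prod_finset, eval_finsetSum]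
  refine sum_congr rfl fun j hj => ?_
  rw [eval_mul, eval_prod, prod_eq_one fun l hl => hone l (mem_of_mem_erase hl), one_mul]
  simp [basisDivisor]

theorem eval_derivative_basis_of_ne (hi : i ∈ s) (hj : j ∈ s) (hji : j ≠ i) :
    eval (v j) (derivative (Lagrange.basis s v i)) =
      nodalWeight s v i * ∏ l ∈ (s.erase i).erase j, (v j - v l) := by
  rw [basis_eq_prod_sub_inv_mul_nodal_div hi, ← nodal_erase_eq_nodal_div hi, derivative_C_mul,
    eval_mul, eval_C, eval_nodal_derivative_eval_node_eq (mem_erase.mpr ⟨hji, hj⟩), eval_nodal]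

end Lagrange

section Rolle

open Set

variable {a b : ℝ} {f : ℝ → ℝ} {m : ℕ} {z : ℕ → ℝ}

theorem exists_derivWithin_eq_zero_between (hf : ContinuousOn f (Icc a b))
    (hz : ∀ i < m, z i < z (i + 1)) (hzI : ∀ i ≤ m, z i ∈ Icc a b)
    (hfz : ∀ i ≤ m, f (z i) = 0) :
    ∃ w : ℕ → ℝ, ∀ i < m, w i ∈ Ioo (z i) (z (i + 1)) ∧ derivWithin f (Icc a b) (w i) = 0 := by
  have hrolle : ∀ i < m, ∃ c ∈ Ioo (z i) (z (i + 1)), derivWithin f (Icc a b) c = 0 := by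
    intro i hi
    have hsub : Icc (z i) (z (i + 1)) ⊆ Icc a b :=
      Icc_subset_Icc (hzI i hi.le).1 (hzI (i + 1) hi).2
    obtain ⟨c, hc, hc0⟩ := exists_deriv_eq_zero (hz i hi) (hf.mono hsub)
      (by rw [hfz i hi.le, hfz (i + 1) hi])
    refine ⟨c, hc, ?_⟩
    rwa [derivWithin_of_mem_nhds (Filter.mem_of_superset (Ioo_mem_nhds hc.1 hc.2)
      (Ioo_subset_Icc_self.trans hsub))]
  choose! w hw using hrolle
  exact ⟨w, hw⟩

theorem exists_iteratedDerivWithin_eq_zero (hab : a < b) (hf : ContDiffOn ℝ m f (Icc a b))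
    (hz : ∀ i < m, z i < z (i + 1)) (hzI : ∀ i ≤ m, z i ∈ Icc a b)
    (hfz : ∀ i ≤ m, f (z i) = 0) :
    ∃ ξ ∈ Icc a b, iteratedDerivWithin m f (Icc a b) ξ = 0 := by
  induction m generalizing f z with
  | zero => exact ⟨z 0, hzI 0 le_rfl, by simpa using hfz 0 le_rfl⟩
  | succ m ih =>
    obtain ⟨w, hw⟩ := exists_derivWithin_eq_zero_between hf.continuousOn hz hzI hfz
    have hf' : ContDiffOn ℝ m (derivWithin f (Icc a b)) (Icc a b) :=
      hf.derivWithin (uniqueDiffOn_Icc hab) le_rfl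
    rw [iteratedDerivWithin_succ']
    refine ih hf' (fun i hi => (hw i (by omega)).1.2.trans (hw (i + 1) (by omega)).1.1)
      (fun i hi => ⟨(hzI i (by omega)).1.trans (hw i (by omega)).1.1.le,
        (hw i (by omega)).1.2.le.trans (hzI (i + 1) (by omega)).2⟩)
      (fun i hi => (hw i (by omega)).2)

theorem exists_iteratedDerivWithin_succ_eq_zero (hab : a < b)
    (hf : ContDiffOn ℝ (m + 1) f (Icc a b))
    (hz : ∀ i < m, z i < z (i + 1)) (hzI : ∀ i ≤ m, z i ∈ Icc a b)
    (hfz : ∀ i ≤ m, f (z i) = 0) (hf'z : derivWithin f (Icc a b) (z 0) = 0) :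
    ∃ ξ ∈ Icc a b, iteratedDerivWithin (m + 1) f (Icc a b) ξ = 0 := by
  obtain ⟨w, hw⟩ := exists_derivWithin_eq_zero_between hf.continuousOn hz hzI hfz
  -- the zeros of `f'`: the node `z 0`, then the Rolle points between consecutive nodes
  let y : ℕ → ℝ := fun | 0 => z 0 | i + 1 => w i
  have hf' : ContDiffOn ℝ m (derivWithin f (Icc a b)) (Icc a b) :=
    hf.derivWithin (uniqueDiffOn_Icc hab) le_rfl
  rw [iteratedDerivWithin_succ']
  refine exists_iteratedDerivWithin_eq_zero hab hf' (z := y) ?_ ?_ ?_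
  · rintro (_ | i) hi
    · exact (hw 0 (by omega)).1.1
    · exact (hw i (by omega)).1.2.trans (hw (i + 1) (by omega)).1.1
  · rintro (_ | i) hi
    · exact hzI 0 (Nat.zero_le _)
    · exact ⟨(hzI i (by omega)).1.trans (hw i (by omega)).1.1.le,
        (hw i (by omega)).1.2.le.trans (hzI (i + 1) (by omega)).2⟩
  · rintro (_ | i) hi
    · exact hf'z
    · exact (hw i (by omega)).2

end Rolle

section Interpolation

open Set Finset Lagrange

theorem StrictMonoOn.injOn_range_succ {β : Type*} [Preorder β] {v : ℕ → β} {n : ℕ}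
    (hv : StrictMonoOn v (Set.Iic n)) : Set.InjOn v (Finset.range (n + 1)) :=
  hv.injOn.mono fun i hi => by simpa [Nat.lt_succ_iff] using hi

variable {a b : ℝ} {n : ℕ} {u : ℝ → ℝ} {v : ℕ → ℝ}

theorem exists_iteratedDerivWithin_eq_of_derivWithin_eq (hab : a < b)
    (hu : ContDiffOn ℝ (n + 1) u (Icc a b)) (hv : StrictMonoOn v (Set.Iic n))
    (hvI : ∀ i ≤ n, v i ∈ Icc a b) {c : ℝ}
    (hc : derivWithin u (Icc a b) (v 0) = eval (v 0) (derivative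
      ((interpolate (range (n + 1)) v fun i => u (v i)) + C c * nodal (range (n + 1)) v))) :
    ∃ ξ ∈ Icc a b, iteratedDerivWithin (n + 1) u (Icc a b) ξ = c * (n + 1).factorial := by
  set s := range (n + 1)
  set q := (interpolate s v fun i => u (v i)) + C c * nodal s v
  have hs : UniqueDiffOn ℝ (Icc a b) := uniqueDiffOn_Icc hab
  have hinj : Set.InjOn v s := hv.injOn_range_succ
  have hv0 : v 0 ∈ Icc a b := hvI 0 n.zero_le
  have hq : derivative^[n + 1] q = C (c * (n + 1).factorial) := by
    have := iterate_derivative_add_C_mul_nodal (v := v)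
      (degree_interpolate_lt (fun i => u (v i)) hinj) c
    rwa [card_range] at this
  have hqC : ContDiff ℝ (n + 1) fun t => q.eval t := q.contDiff_eval _
  obtain ⟨ξ, hξ, hφξ⟩ := exists_iteratedDerivWithin_succ_eq_zero hab (hu.sub hqC.contDiffOn)
    (fun i hi => hv (by simp; omega) (by simp; omega) (by omega)) hvI
    (fun i hi => by
      have hi : i ∈ s := mem_range.mpr (by omega)
      change u (v i) - eval (v i) q = 0
      rw [eval_add, eval_mul, eval_nodal_at_node hi, eval_interpolate_at_node _ hinj hi]
      ring)
    (by
      rw [derivWithin_fun_sub ((hu.differentiableOn (by simp)) _ hv0) q.differentiableWithinAt,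
        q.derivWithin (hs.uniqueDiffWithinAt hv0), hc, sub_self])
  refine ⟨ξ, hξ, ?_⟩
  rwa [← Pi.sub_def, iteratedDerivWithin_sub hξ hs (hu ξ hξ) hqC.contDiffWithinAt,
    iteratedDerivWithin_eval q hs _ hξ, hq, eval_C, sub_eq_zero] at hφξ

theorem exists_derivWithin_sub_derivative_interpolate_eq (hab : a < b)
    (hu : ContDiffOn ℝ (n + 1) u (Icc a b)) (hv : StrictMonoOn v (Set.Iic n))
    (hvI : ∀ i ≤ n, v i ∈ Icc a b) :
    ∃ ξ ∈ Icc a b,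
      derivWithin u (Icc a b) (v 0)
          - eval (v 0) (derivative (interpolate (range (n + 1)) v fun i => u (v i)))
        = iteratedDerivWithin (n + 1) u (Icc a b) ξ / (n + 1).factorial
          * eval (v 0) (derivative (nodal (range (n + 1)) v)) := by
  have h0 : 0 ∈ range (n + 1) := mem_range.mpr n.succ_pos
  have hinj : Set.InjOn v (Finset.range (n + 1)) := hv.injOn_range_succ
  have hω : eval (v 0) (derivative (nodal (range (n + 1)) v)) ≠ 0 := by
    simpa [nodalWeight_eq_eval_derivative_nodal h0] using nodalWeight_ne_zero hinj h0
  obtain ⟨ξ, hξ, hu'ξ⟩ := exists_iteratedDerivWithin_eq_of_derivWithin_eq hab hu hv hvI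
    (c := (derivWithin u (Icc a b) (v 0)
      - eval (v 0) (derivative (interpolate (range (n + 1)) v fun i => u (v i))))
      / eval (v 0) (derivative (nodal (range (n + 1)) v)))
    (by rw [derivative_add, derivative_C_mul, eval_add, eval_mul, eval_C, div_mul_cancel₀ _ hω,
      add_sub_cancel])
  refine ⟨ξ, hξ, ?_⟩
  rw [hu'ξ, mul_div_cancel_right₀ _ (by positivity), div_mul_cancel₀ _ hω]

end Interpolation

section SquareNodes

open Finset

theorem range_succ_erase_zero (k : ℕ) : (range (k + 1)).erase 0 = Icc 1 k := by
  ext j; simp only [mem_erase, mem_range, mem_Icc]; omega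

theorem prod_Icc_sq_eq_factorial_sq (k : ℕ) :
    ∏ j ∈ Icc 1 k, (j : ℝ) ^ 2 = (k.factorial : ℝ) ^ 2 := by
  rw [prod_pow, ← Nat.cast_prod, ← prod_Ico_id_eq_factorial]
  rfl

def sqNode (t₀ h : ℝ) (j : ℕ) : ℝ := t₀ + (j : ℝ) ^ 2 * h

variable {t₀ h : ℝ}

@[simp] theorem sqNode_zero : sqNode t₀ h 0 = t₀ := by simp [sqNode]

theorem sqNode_sub_sqNode (i j : ℕ) :
    sqNode t₀ h i - sqNode t₀ h j = ((i : ℝ) ^ 2 - (j : ℝ) ^ 2) * h := by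
  simp only [sqNode]; ring

theorem sub_sqNode (j : ℕ) : t₀ - sqNode t₀ h j = -h * (j : ℝ) ^ 2 := by
  simp only [sqNode]; ring

theorem sqNode_strictMono (hh : 0 < h) : StrictMono (sqNode t₀ h) := fun i j hij => by
  simp only [sqNode]; gcongr

theorem sqNode_injective (hh : h ≠ 0) : Function.Injective (sqNode t₀ h) := fun i j hij => by
  have : ((i : ℝ) ^ 2 - (j : ℝ) ^ 2) * h = 0 := by rw [← sqNode_sub_sqNode, hij, sub_self]
  have := sub_eq_zero.mp ((mul_eq_zero.mp this).resolve_right hh)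
  exact Nat.pow_left_injective two_ne_zero (by exact_mod_cast this)

theorem eval_derivative_nodal_sqNode (k : ℕ) :
    eval t₀ (derivative (Lagrange.nodal (range (k + 1)) (sqNode t₀ h))) =
      (-h) ^ k * (k.factorial : ℝ) ^ 2 := by
  have := Lagrange.eval_nodal_derivative_eval_node_eq (v := sqNode t₀ h)
    (mem_range.mpr k.succ_pos)
  rw [sqNode_zero] at this
  rw [this, Lagrange.eval_nodal, range_succ_erase_zero, ← prod_Icc_sq_eq_factorial_sq]
  simp only [sub_sqNode, prod_mul_distrib, prod_const, Nat.card_Icc, add_tsub_cancel_right]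

theorem eval_derivative_basis_sqNode_zero (hh : h ≠ 0) (k : ℕ) :
    eval t₀ (derivative (Lagrange.basis (range (k + 1)) (sqNode t₀ h) 0)) = betaCoef k 0 / h := by
  have := Lagrange.eval_derivative_basis_self
    ((sqNode_injective (t₀ := t₀) hh).injOn (s := ↑(range (k + 1)))) (mem_range.mpr k.succ_pos)
  rw [sqNode_zero] at this
  rw [this, betaCoef, if_pos rfl, range_succ_erase_zero, neg_div, sum_div, ← sum_neg_distrib]
  refine sum_congr rfl fun j hj => ?_
  have : (j : ℝ) ≠ 0 := by have := (mem_Icc.mp hj).1; positivity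
  rw [sub_sqNode]
  field_simp

theorem eval_derivative_basis_sqNode_of_ne_zero (hh : h ≠ 0) {k i : ℕ} (hi : i ∈ range (k + 1))
    (hi0 : i ≠ 0) :
    eval t₀ (derivative (Lagrange.basis (range (k + 1)) (sqNode t₀ h) i)) = betaCoef k i / h := by
  have h0 : 0 ∈ (range (k + 1)).erase i := mem_erase.mpr ⟨hi0.symm, mem_range.mpr k.succ_pos⟩
  have hi' : i ∈ (range (k + 1)).erase 0 := mem_erase.mpr ⟨hi0, hi⟩
  have hfac : (i : ℝ) ^ 2 * ∏ l ∈ ((range (k + 1)).erase i).erase 0, (l : ℝ) ^ 2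
      = (k.factorial : ℝ) ^ 2 := by
    rw [erase_right_comm, mul_prod_erase _ (fun l : ℕ => (l : ℝ) ^ 2) hi',
      range_succ_erase_zero, prod_Icc_sq_eq_factorial_sq]
  have := Lagrange.eval_derivative_basis_of_ne (v := sqNode t₀ h) hi (mem_of_mem_erase h0) hi0.symm
  rw [sqNode_zero] at this
  rw [this, betaCoef, if_neg hi0, ← hfac]
  simp only [Lagrange.nodalWeight, sqNode_sub_sqNode, sub_sqNode, mul_inv, prod_mul_distrib,
    prod_inv_distrib, prod_const, card_erase_of_mem hi, card_erase_of_mem h0, card_range,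
    add_tsub_cancel_right]
  have : (i : ℝ) ≠ 0 := Nat.cast_ne_zero.mpr hi0
  obtain ⟨m, rfl⟩ : ∃ m, k = m + 1 := Nat.exists_eq_add_one.mpr (by have := mem_range.mp hi; omega)
  simp only [add_tsub_cancel_right]
  field_simp
  ring

theorem eval_derivative_interpolate_sqNode (hh : h ≠ 0) (k : ℕ) (r : ℕ → ℝ) :
    eval t₀ (derivative (Lagrange.interpolate (range (k + 1)) (sqNode t₀ h) r)) =
      1 / h * ∑ i ∈ range (k + 1), betaCoef k i * r i := by
  rw [Lagrange.interpolate_apply, derivative_sum, eval_finsetSum, mul_sum]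
  refine sum_congr rfl fun i hi => ?_
  have hbasis : eval t₀ (derivative (Lagrange.basis (range (k + 1)) (sqNode t₀ h) i))
      = betaCoef k i / h := by
    rcases eq_or_ne i 0 with rfl | hi0
    · exact eval_derivative_basis_sqNode_zero hh k
    · exact eval_derivative_basis_sqNode_of_ne_zero hh hi hi0
  rw [derivative_C_mul, eval_mul, eval_C, hbasis]
  ring

end SquareNodes

/-- Error bound for the non-equidistant derivative approximation: if `u` is `(k+1)`-times
continuously differentiable on `[t₀, t₀ + k²·h]` with `|u⁽ᵏ⁺¹⁾| ≤ M` there, then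
`|u′(t₀) − (1/h)·∑_{i=0}^k β_i^k u(t₀ + i²·h)| ≤ M·((k!)²/(k+1)!)·h^k`. -/
theorem deriv_approx_nonequidistant_error (k : ℕ) (hk : 1 ≤ k) (h : ℝ) (hh : 0 < h)
    (t₀ M : ℝ) (u : ℝ → ℝ)
    (hu : ContDiffOn ℝ (k + 1) u (Set.Icc t₀ (t₀ + ((k : ℝ) ^ 2) * h)))
    (hM : ∀ s ∈ Set.Icc t₀ (t₀ + ((k : ℝ) ^ 2) * h),
      |iteratedDerivWithin (k + 1) u (Set.Icc t₀ (t₀ + ((k : ℝ) ^ 2) * h)) s| ≤ M) :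
    |derivWithin u (Set.Icc t₀ (t₀ + ((k : ℝ) ^ 2) * h)) t₀
        - (1 / h) * ∑ i ∈ Finset.range (k + 1), betaCoef k i * u (t₀ + ((i : ℝ) ^ 2) * h)|
      ≤ M * ((Nat.factorial k : ℝ) ^ 2 / (Nat.factorial (k + 1) : ℝ)) * h ^ k := by
  have hmono : StrictMono (sqNode t₀ h) := sqNode_strictMono hh
  have hvI : ∀ i ≤ k, sqNode t₀ h i ∈ Set.Icc t₀ (t₀ + (k : ℝ) ^ 2 * h) := fun i hi =>
    ⟨sqNode_zero.symm.trans_le (hmono.monotone i.zero_le), hmono.monotone hi⟩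
  have hab : t₀ < t₀ + (k : ℝ) ^ 2 * h := sqNode_zero.symm.trans_lt (hmono hk)
  obtain ⟨ξ, hξ, herr⟩ :=
    exists_derivWithin_sub_derivative_interpolate_eq hab hu (hmono.strictMonoOn _) hvI
  rw [sqNode_zero, eval_derivative_interpolate_sqNode hh.ne', eval_derivative_nodal_sqNode] at herr
  change |_ - 1 / h * ∑ i ∈ Finset.range (k + 1), betaCoef k i * u (sqNode t₀ h i)| ≤ _
  rw [herr]
  calc |iteratedDerivWithin (k + 1) u _ ξ / (k + 1).factorial * ((-h) ^ k * (k.factorial : ℝ) ^ 2)|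
      = |iteratedDerivWithin (k + 1) u _ ξ| * ((k.factorial : ℝ) ^ 2 / (k + 1).factorial)
          * h ^ k := by
        rw [abs_mul, abs_div, abs_mul, abs_pow, abs_neg, abs_of_pos hh, Nat.abs_cast, abs_pow,
          Nat.abs_cast]
        ring
    _ ≤ M * ((k.factorial : ℝ) ^ 2 / (k + 1).factorial) * h ^ k := by gcongr; exact hM ξ hξ
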